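/- Let W ⊆ S^d V be a linear series of homogeneous forms of degree d (V an n-dimensional ℂ-vector space) admitting a direct sum decomposition: V = V_1 ⊕ V_2 and there are subspaces W_1 ⊆ S^d V_1, W_2 ⊆ S^d V_2 with W ⊆ W_1 ⊕ W_2 such that both projections W → W_1 and W → W_2 are isomorphisms. Then the apolar ideal W^⊥ = ∩_{F ∈ W} F^⊥ has at least dim_ℂ W minimal generators of degree d. -/

import Mathlib

/-!
Apolarity setup.  `S = ℂ[x_1,…,x_n]` and its dual ring `T = ℂ[α_1,…,α_n]` are both
realized as `MvPolynomial (Fin n) ℂ`; the apolarity action `Θ ⌟ F` (`contract Θ F`)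
lets `α_i` act as the partial differentiation operator `∂/∂x_i`.
-/

open MvPolynomial

noncomputable section Apolarity

/-- Partial derivatives on `ℂ[x_1,…,x_n]` commute. -/
lemma pderiv_pderiv_comm (n : ℕ) (i j : Fin n) (f : MvPolynomial (Fin n) ℂ) :
    pderiv i (pderiv j f) = pderiv j (pderiv i f) := by
  induction f using MvPolynomial.induction_on with
  | C a => simp
  | add p q hp hq => simp [hp, hq]
  | mul_X p k hp =>
    rcases eq_or_ne i k with rfl | hik
    · rcases eq_or_ne j i with rfl | hjk
      · rfl
      · simp only [pderiv_mul, pderiv_X_self, pderiv_X_of_ne hjk, pderiv_X_of_ne hjk.symm,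
          map_add, map_zero, map_one, Derivation.map_one_eq_zero, mul_one, mul_zero,
          add_zero, zero_add, hp]
    · rcases eq_or_ne j k with rfl | hjk
      · simp only [pderiv_mul, pderiv_X_self, pderiv_X_of_ne hik, pderiv_X_of_ne hik.symm,
          map_add, map_zero, map_one, Derivation.map_one_eq_zero, mul_one, mul_zero,
          add_zero, zero_add, hp]
      · simp only [pderiv_mul, pderiv_X_of_ne hik.symm, pderiv_X_of_ne hjk.symm, map_add,
          map_zero, mul_zero, add_zero, zero_add, hp]

variable (n : ℕ)

/-- The endomorphism `∂/∂x_i` of `S = ℂ[x_1,…,x_n]`. -/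
def derOp (i : Fin n) : Module.End ℂ (MvPolynomial (Fin n) ℂ) :=
  (pderiv i).toLinearMap

lemma derOp_commute (i j : Fin n) : Commute (derOp n i) (derOp n j) :=
  LinearMap.ext fun f => pderiv_pderiv_comm n i j f

/-- The commuting product of the operators `(∂/∂x_i)^(m i)`. -/
def piDiffHom : (Fin n → Multiplicative ℕ) →* Module.End ℂ (MvPolynomial (Fin n) ℂ) :=
  MonoidHom.noncommPiCoprod (fun i : Fin n => powersHom _ (derOp n i))
    (fun i j _ x y => ((derOp_commute n i j).pow_pow x y))

/-- The differential operator `∏ i, (∂/∂x_i)^(m i)` attached to an exponent vector `m`. -/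
def diffMonoidHom : Multiplicative (Fin n →₀ ℕ) →* Module.End ℂ (MvPolynomial (Fin n) ℂ) :=
  (piDiffHom n).comp
    (AddMonoidHom.toMultiplicative
      (Finsupp.coeFnAddHom : (Fin n →₀ ℕ) →+ (Fin n → ℕ)))

/-- The apolarity action of the dual ring `T = ℂ[α_1,…,α_n]` on `S = ℂ[x_1,…,x_n]`, as an
algebra homomorphism to differential operators: `α_i` acts as `∂/∂x_i`. -/
def apolarAlgHom :
    MvPolynomial (Fin n) ℂ →ₐ[ℂ] Module.End ℂ (MvPolynomial (Fin n) ℂ) :=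
  AddMonoidAlgebra.lift ℂ _ (Fin n →₀ ℕ) (diffMonoidHom n)

variable {n}

/-- The apolarity action `Θ ⌟ F`: apply to `F` the differential operator obtained from `Θ`
by substituting `∂/∂x_i` for the `i`-th (dual) variable. -/
def contract (Θ F : MvPolynomial (Fin n) ℂ) : MvPolynomial (Fin n) ℂ :=
  apolarAlgHom n Θ F

lemma apolarAlgHom_X (i : Fin n) : apolarAlgHom n (X i) = derOp n i := by
  classical
  have hX : (X i : MvPolynomial (Fin n) ℂ)
      = AddMonoidAlgebra.single (Finsupp.single i 1) (1 : ℂ) := rfl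
  rw [hX]
  rw [show apolarAlgHom n (AddMonoidAlgebra.single (Finsupp.single i 1) (1:ℂ))
      = (1:ℂ) • diffMonoidHom n (Multiplicative.ofAdd (Finsupp.single i 1)) from
    AddMonoidAlgebra.lift_single _ _ _]
  rw [one_smul]
  show piDiffHom n ((AddMonoidHom.toMultiplicative
        (Finsupp.coeFnAddHom : (Fin n →₀ ℕ) →+ (Fin n → ℕ)))
        (Multiplicative.ofAdd (Finsupp.single i 1))) = derOp n i
  have harg : (AddMonoidHom.toMultiplicative
        (Finsupp.coeFnAddHom : (Fin n →₀ ℕ) →+ (Fin n → ℕ)))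
        (Multiplicative.ofAdd (Finsupp.single i 1))
      = Pi.mulSingle (M := fun _ : Fin n => Multiplicative ℕ) i (Multiplicative.ofAdd 1) := by
    funext j
    rcases eq_or_ne j i with rfl | hj
    · show Multiplicative.ofAdd ((Finsupp.single j 1 : Fin n →₀ ℕ) j)
        = Pi.mulSingle (M := fun _ : Fin n => Multiplicative ℕ) j (Multiplicative.ofAdd 1) j
      rw [Finsupp.single_eq_same, Pi.mulSingle_eq_same]
    · show Multiplicative.ofAdd ((Finsupp.single i 1 : Fin n →₀ ℕ) j)
        = Pi.mulSingle (M := fun _ : Fin n => Multiplicative ℕ) i (Multiplicative.ofAdd 1) j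
      rw [Finsupp.single_eq_of_ne hj, Pi.mulSingle_eq_of_ne hj]
      exact ofAdd_zero
  refine (congrArg (piDiffHom n) harg).trans ?_
  refine (MonoidHom.noncommPiCoprod_mulSingle (ϕ := fun i : Fin n => powersHom _ (derOp n i))
    i (Multiplicative.ofAdd 1)).trans ?_
  rfl

/-- Sanity check: the dual variable `α_i` acts on `F` as `∂F/∂x_i`. -/
@[simp] lemma contract_X (i : Fin n) (F : MvPolynomial (Fin n) ℂ) :
    contract (X i) F = pderiv i F := by
  rw [contract, apolarAlgHom_X]; rfl

/-- The apolar (annihilator) ideal `F^⊥ = {Θ ∈ T : Θ ⌟ F = 0}` of a polynomial `F`. -/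
def apolarIdeal (F : MvPolynomial (Fin n) ℂ) : Ideal (MvPolynomial (Fin n) ℂ) where
  carrier := {Θ | contract Θ F = 0}
  zero_mem' := by simp [contract]
  add_mem' := by
    intro a b ha hb
    simp only [Set.mem_setOf_eq, contract, map_add, LinearMap.add_apply] at *
    rw [ha, hb, add_zero]
  smul_mem' := by
    intro c x hx
    simp only [Set.mem_setOf_eq, smul_eq_mul, contract, map_mul, Module.End.mul_apply] at *
    rw [hx, map_zero]

@[simp] lemma mem_apolarIdeal {Θ F : MvPolynomial (Fin n) ℂ} :
    Θ ∈ apolarIdeal F ↔ contract Θ F = 0 := Iff.rfl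

variable (n)

/-- The irrelevant maximal ideal `m = ⟨α_1,…,α_n⟩` of `T`. -/
def irrIdeal : Ideal (MvPolynomial (Fin n) ℂ) :=
  Ideal.span (Set.range X)

variable {n}

/-- The homogeneous ideal `I` has a minimal generator of degree `k`, i.e. `(I/mI)_k ≠ 0`:
there is a homogeneous element of `I` of degree `k` not belonging to `m * I`. -/
def HasMinGenOfDegree (I : Ideal (MvPolynomial (Fin n) ℂ)) (k : ℕ) : Prop :=
  ∃ Θ, Θ ∈ I ∧ Θ.IsHomogeneous k ∧ Θ ∉ irrIdeal n * I

/-- The homogeneous ideal `I` has at least `r` minimal generators of degree `k`, i.e.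
`dim_ℂ (I/mI)_k ≥ r`: there are `r` homogeneous degree-`k` elements of `I` that are
linearly independent modulo `m * I`. -/
def MinGensAtLeast (I : Ideal (MvPolynomial (Fin n) ℂ)) (k r : ℕ) : Prop :=
  ∃ Θ : Fin r → MvPolynomial (Fin n) ℂ,
    (∀ i, Θ i ∈ I ∧ (Θ i).IsHomogeneous k) ∧
    ∀ c : Fin r → ℂ, (∑ i, c i • Θ i) ∈ irrIdeal n * I → ∀ i, c i = 0

/-- `F` is an `s`-fold direct sum of degree `d`: `F = F_1 + ⋯ + F_s` where the `F_i` are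
nonzero degree-`d` forms in independent subspaces `V_i` of the space of linear forms with
`V = V_1 ⊕ ⋯ ⊕ V_s` (i.e. in disjoint sets of variables, up to linear change of variables;
`F_i ∈ S^d V_i` is expressed as membership in the subalgebra generated by `V_i`). -/
def IsSFoldDirectSum (F : MvPolynomial (Fin n) ℂ) (d s : ℕ) : Prop :=
  ∃ (V : Fin s → Submodule ℂ (MvPolynomial (Fin n) ℂ))
    (G : Fin s → MvPolynomial (Fin n) ℂ),
    (∀ i, V i ≤ homogeneousSubmodule (Fin n) ℂ 1) ∧
    iSupIndep V ∧
    (⨆ i, V i) = homogeneousSubmodule (Fin n) ℂ 1 ∧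
    (∀ i, G i ≠ 0 ∧ (G i).IsHomogeneous d ∧ G i ∈ Algebra.adjoin ℂ (V i : Set _)) ∧
    F = ∑ i, G i

/-- `F` is a direct sum: `F = F₁ + F₂` with `F₁ ∈ S^d V₁`, `F₂ ∈ S^d V₂` nonzero and
`V = V₁ ⊕ V₂`. -/
def IsDirectSum (F : MvPolynomial (Fin n) ℂ) (d : ℕ) : Prop :=
  IsSFoldDirectSum F d 2

/-- `F` is a limit (as `t → 0`) of `s`-fold direct sums of degree `d`. -/
def IsLimitOfSFoldDirectSums (F : MvPolynomial (Fin n) ℂ) (d s : ℕ) : Prop :=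
  ∃ G : ℂ → MvPolynomial (Fin n) ℂ,
    (∀ t : ℂ, t ≠ 0 → IsSFoldDirectSum (G t) d s) ∧
    ∀ m : Fin n →₀ ℕ,
      Filter.Tendsto (fun t => MvPolynomial.coeff m (G t))
        (nhdsWithin (0 : ℂ) {(0 : ℂ)}ᶜ) (nhds (MvPolynomial.coeff m F))

/-- `F` is a limit of direct sums. -/
def IsLimitOfDirectSums (F : MvPolynomial (Fin n) ℂ) (d : ℕ) : Prop :=
  IsLimitOfSFoldDirectSums F d 2

/-- `F` is concise: `(F^⊥)_1 = 0`, i.e. `F` cannot be written using fewer variables. -/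
def Concise (F : MvPolynomial (Fin n) ℂ) : Prop :=
  ∀ Θ : MvPolynomial (Fin n) ℂ, Θ.IsHomogeneous 1 → contract Θ F = 0 → Θ = 0

end Apolarity

/-- The apolar ideal `W^⊥ = ⋂_{F ∈ W} F^⊥` of a linear series `W`. -/
noncomputable def seriesApolarIdeal {n : ℕ} (W : Submodule ℂ (MvPolynomial (Fin n) ℂ)) :
    Ideal (MvPolynomial (Fin n) ℂ) :=
  ⨅ F ∈ W, apolarIdeal F

/-!
Write a basis of `W` as `b_j = G_j + H_j` with `G_j ∈ W₁`, `H_j ∈ W₂`. The `G_j` together with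
the `b_j` are linearly independent, so, the apolarity pairing being perfect in degree `d`, there
are degree-`d` forms `Θ_i` with `Θ_i ⌟ G_j = δ_ij` and `Θ_i ⌟ b_j = 0`; these lie in `W^⊥`.
For `Ξ ∈ W^⊥` the form `Ξ ⌟ G_j = -Ξ ⌟ H_j` lies in both `ℂ[V₁]` and `ℂ[V₂]`, hence is a
constant, so every element of `m W^⊥` annihilates each `G_j`. Contracting a combination
`∑ c_i Θ_i ∈ m W^⊥` with `G_j` then gives `c_j = 0`.
-/

section LinearAlgebra

variable {R K M ι : Type*}

theorem LinearIndependent.of_sub_mem [Ring R] [AddCommGroup M] [Module R M] {b g : ι → M}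
    {W U : Submodule R M} (hb : LinearIndependent R b) (hbW : ∀ j, b j ∈ W)
    (hWU : Disjoint W U) (hgb : ∀ j, b j - g j ∈ U) : LinearIndependent R g := by
  have hcomp : U.mkQ ∘ g = U.mkQ ∘ b :=
    funext fun j => (Submodule.Quotient.eq U).mpr (by simpa using neg_mem (hgb j))
  refine LinearIndependent.of_comp U.mkQ (hcomp ▸ hb.map ?_)
  rw [Submodule.ker_mkQ]
  exact hWU.mono_left (Submodule.span_le.mpr (Set.range_subset_iff.mpr hbW))

theorem LinearIndependent.exists_linearMap_apply_eq_single [Field K] [AddCommGroup M]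
    [Module K M] {v : ι → M} (hv : LinearIndependent K v) :
    ∃ f : M →ₗ[K] ι →₀ K, ∀ j, f (v j) = Finsupp.single j 1 := by
  obtain ⟨f, hf⟩ := (Finsupp.linearCombination K v).exists_leftInverse_of_injective
    (LinearMap.ker_eq_bot.mpr hv)
  exact ⟨f, fun j => by simpa using LinearMap.congr_fun hf (Finsupp.single j 1)⟩

theorem Submodule.exists_linearMap_eq_zero_eq_id_of_disjoint [Field K] [AddCommGroup M]
    [Module K M] {V₁ V₂ : Submodule K M} (h : Disjoint V₁ V₂) :
    ∃ π : M →ₗ[K] M, (∀ x ∈ V₁, π x = 0) ∧ ∀ x ∈ V₂, π x = x := by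
  obtain ⟨g, hg⟩ := (V₁.mkQ ∘ₗ V₂.subtype).exists_leftInverse_of_injective (by
    rw [LinearMap.ker_comp, Submodule.ker_mkQ, ← Submodule.disjoint_iff_comap_eq_bot]
    exact h.symm)
  refine ⟨V₂.subtype ∘ₗ g ∘ₗ V₁.mkQ, fun x hx => ?_, fun x hx => ?_⟩
  · simp [(Submodule.Quotient.mk_eq_zero V₁).mpr hx]
  · simpa using congrArg Subtype.val (LinearMap.congr_fun hg ⟨x, hx⟩)

theorem LinearIndependent.sum_elim_of_sub_mem [Ring R] [AddCommGroup M] [Module R M]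
    {b g : ι → M} {W W₁ W₂ : Submodule R M} (hb : LinearIndependent R b) (hbW : ∀ j, b j ∈ W)
    (hg : ∀ j, g j ∈ W₁) (hbg : ∀ j, b j - g j ∈ W₂) (h₁ : Disjoint W W₁) (h₂ : Disjoint W W₂) :
    LinearIndependent R (Sum.elim g b) :=
  (hb.of_sub_mem hbW h₂ hbg).sum_type hb <| h₁.symm.mono
    (Submodule.span_le.mpr (Set.range_subset_iff.mpr hg))
    (Submodule.span_le.mpr (Set.range_subset_iff.mpr hbW))

end LinearAlgebra

section Polynomial

variable {σ R K : Type*}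

theorem Finsupp.exists_lt_of_degree_eq [Fintype σ] {m m' : σ →₀ ℕ}
    (hdeg : m.degree = m'.degree) (hne : m ≠ m') : ∃ i, m' i < m i := by
  by_contra! hle
  obtain ⟨i, hi⟩ : ∃ i, m i ≠ m' i := by
    by_contra! h
    exact hne (Finsupp.ext h)
  have : ∑ j, m j < ∑ j, m' j :=
    Finset.sum_lt_sum (fun j _ => hle j) ⟨i, Finset.mem_univ i, (hle i).lt_of_ne hi⟩
  rw [← Finsupp.degree_eq_sum, ← Finsupp.degree_eq_sum, hdeg] at this
  exact this.false

theorem MvPolynomial.pderiv_iterate_monomial [CommSemiring R] (i : σ) (k : ℕ)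
    (m : σ →₀ ℕ) (c : R) :
    (pderiv (R := R) i)^[k] (monomial m c) =
      monomial (m - Finsupp.single i k) (c * (m i).descFactorial k) := by
  classical
  induction k with
  | zero => simp
  | succ k ih =>
    rw [Function.iterate_succ_apply', ih, pderiv_monomial, tsub_tsub, ← Finsupp.single_add,
      Finsupp.tsub_apply, Finsupp.single_eq_same, Nat.descFactorial_succ]
    push_cast
    ring_nf

theorem MvPolynomial.IsHomogeneous.eq_sum_monomial [CommSemiring R] {F : MvPolynomial σ R}
    {d : ℕ} (hF : F.IsHomogeneous d) {A : Finset (σ →₀ ℕ)} (hA : ∀ m, m.degree = d → m ∈ A) :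
    F = ∑ m ∈ A, monomial m (coeff m F) := by
  refine F.as_sum.trans (Finset.sum_subset (fun m hm => hA m ?_) fun m _ hm => ?_)
  · rw [Finsupp.degree_eq_weight_one]
    exact hF (mem_support_iff.mp hm)
  · rw [notMem_support_iff.mp hm, monomial_zero]

theorem MvPolynomial.pderiv_mem_adjoin [CommSemiring R] {V : Submodule R (MvPolynomial σ R)}
    (hV : V ≤ homogeneousSubmodule σ R 1) (i : σ) {F : MvPolynomial σ R}
    (hF : F ∈ Algebra.adjoin R (V : Set (MvPolynomial σ R))) :
    pderiv i F ∈ Algebra.adjoin R (V : Set (MvPolynomial σ R)) := by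
  induction hF using Algebra.adjoin_induction with
  | mem v hv =>
    have hconst : (pderiv i v).IsHomogeneous 0 := (hV hv).pderiv
    rw [← totalDegree_zero_iff_isHomogeneous, totalDegree_eq_zero_iff_eq_C] at hconst
    rw [hconst]
    exact Subalgebra.algebraMap_mem _ _
  | algebraMap r => simp
  | add x y _ _ hx hy => rw [map_add]; exact Subalgebra.add_mem _ hx hy
  | mul x y hx' hy' hx hy =>
    rw [pderiv_mul]
    exact Subalgebra.add_mem _ (Subalgebra.mul_mem _ hx hy') (Subalgebra.mul_mem _ hx' hy)

theorem MvPolynomial.adjoin_inf_adjoin_le_bot [Field K] {V₁ V₂ : Submodule K (MvPolynomial σ K)}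
    (hV₁ : V₁ ≤ homogeneousSubmodule σ K 1) (hV₂ : V₂ ≤ homogeneousSubmodule σ K 1)
    (h : Disjoint V₁ V₂) :
    Algebra.adjoin K (V₁ : Set (MvPolynomial σ K)) ⊓ Algebra.adjoin K (V₂ : Set _) ≤ ⊥ := by
  -- A linear substitution of the variables killing `V₁` and fixing `V₂` maps `K[V₁]` to the
  -- constants and fixes `K[V₂]`.
  obtain ⟨π, hπ₁, hπ₂⟩ := Submodule.exists_linearMap_eq_zero_eq_id_of_disjoint h
  set φ : MvPolynomial σ K →ₐ[K] MvPolynomial σ K := aeval fun i => π (X i)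
  have hφπ : ∀ v ∈ homogeneousSubmodule σ K 1, φ v = π v := by
    rw [homogeneousSubmodule_one_eq_span_X]
    exact LinearMap.eqOn_span' (f := φ.toLinearMap) (fun v ⟨i, hi⟩ => by simp [φ, ← hi])
  have hfix : Set.EqOn φ (AlgHom.id K _) (Algebra.adjoin K (V₂ : Set (MvPolynomial σ K))) :=
    AlgHom.eqOn_adjoin_iff.mpr fun v hv => by simp [hφπ v (hV₂ hv), hπ₂ v hv]
  have hkill : Algebra.adjoin K (V₁ : Set (MvPolynomial σ K)) ≤ (⊥ : Subalgebra K _).comap φ :=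
    Algebra.adjoin_le fun v hv => by simp [hφπ v (hV₁ hv), hπ₁ v hv]
  rintro p ⟨hp₁, hp₂⟩
  have hφp : φ p = p := hfix hp₂
  exact hφp ▸ hkill hp₁

end Polynomial

section Contraction

variable {n : ℕ}

theorem contract_mul (Θ Ψ F : MvPolynomial (Fin n) ℂ) :
    contract (Θ * Ψ) F = contract Θ (contract Ψ F) := by
  simp only [contract, map_mul, Module.End.mul_apply]

theorem contract_C (a : ℂ) (F : MvPolynomial (Fin n) ℂ) : contract (C a) F = a • F := by
  rw [contract, ← algebraMap_eq, AlgHom.commutes]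
  rfl

theorem contract_add_left (Θ Ψ F : MvPolynomial (Fin n) ℂ) :
    contract (Θ + Ψ) F = contract Θ F + contract Ψ F := by
  simp only [contract, map_add, LinearMap.add_apply]

theorem contract_smul_left (a : ℂ) (Θ F : MvPolynomial (Fin n) ℂ) :
    contract (a • Θ) F = a • contract Θ F := by
  rw [smul_eq_C_mul, contract_mul, contract_C]

theorem contract_sum_left {ι : Type*} (s : Finset ι) (Θ : ι → MvPolynomial (Fin n) ℂ)
    (F : MvPolynomial (Fin n) ℂ) : contract (∑ i ∈ s, Θ i) F = ∑ i ∈ s, contract (Θ i) F := by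
  simp only [contract, map_sum, LinearMap.coe_sum, Finset.sum_apply]

theorem contract_add_right (Θ F G : MvPolynomial (Fin n) ℂ) :
    contract Θ (F + G) = contract Θ F + contract Θ G :=
  map_add _ _ _

theorem contract_zero_right (Θ : MvPolynomial (Fin n) ℂ) : contract Θ 0 = 0 :=
  map_zero _

theorem contract_sum_right {ι : Type*} (s : Finset ι) (Θ : MvPolynomial (Fin n) ℂ)
    (F : ι → MvPolynomial (Fin n) ℂ) : contract Θ (∑ i ∈ s, F i) = ∑ i ∈ s, contract Θ (F i) :=
  map_sum _ _ _

theorem contract_X_pow (i : Fin n) (k : ℕ) (F : MvPolynomial (Fin n) ℂ) :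
    contract (X i ^ k) F = (pderiv (R := ℂ) i)^[k] F := by
  rw [contract, map_pow, apolarAlgHom_X, Module.End.pow_apply]
  rfl

theorem contract_monomial (m m' : Fin n →₀ ℕ) (c c' : ℂ) :
    contract (monomial m c) (monomial m' c') =
      monomial (m' - m) (((∏ i, (m' i).descFactorial (m i) : ℕ) : ℂ) * c * c') := by
  classical
  induction m using Finsupp.induction_linear generalizing c m' c' with
  | zero => simp [contract_C, smul_monomial]
  | add f g ihf ihg =>
    have hprod : ∏ i, (m' i).descFactorial ((g + f) i) =
        (∏ i, ((m' - g) i).descFactorial (f i)) * ∏ i, (m' i).descFactorial (g i) := by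
      rw [← Finset.prod_mul_distrib]
      refine Finset.prod_congr rfl fun i _ => ?_
      rw [Finsupp.tsub_apply, Finsupp.add_apply, ← Nat.descFactorial_mul_descFactorial
        (Nat.le_add_right _ _), Nat.add_sub_cancel_left]
    rw [← mul_one c, ← monomial_mul, contract_mul, ihg, ihf, tsub_tsub, add_comm f g, hprod]
    push_cast
    ring_nf
  | single a k =>
    rw [← mul_one c, ← C_mul_monomial, ← X_pow_eq_monomial, contract_mul, contract_X_pow,
      pderiv_iterate_monomial, contract_C, smul_monomial,
      Finset.prod_eq_single a (fun i _ hi => by simp [Finsupp.single_eq_of_ne hi])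
        (by simp)]
    simp only [Finsupp.single_eq_same, smul_eq_mul]
    ring_nf

theorem contract_monomial_self (m : Fin n →₀ ℕ) (c c' : ℂ) :
    contract (monomial m c) (monomial m c') = C (((∏ i, (m i).factorial : ℕ) : ℂ) * c * c') := by
  simp only [contract_monomial, tsub_self, Nat.descFactorial_self]
  rfl

theorem contract_monomial_eq_zero_of_degree_eq {m m' : Fin n →₀ ℕ} (hdeg : m.degree = m'.degree)
    (hne : m ≠ m') (c c' : ℂ) : contract (monomial m c) (monomial m' c') = 0 := by
  obtain ⟨i, hi⟩ := Finsupp.exists_lt_of_degree_eq hdeg hne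
  rw [contract_monomial, Finset.prod_eq_zero (Finset.mem_univ i)
    (Nat.descFactorial_eq_zero_iff_lt.mpr hi)]
  simp

theorem contract_monomial_of_isHomogeneous {F : MvPolynomial (Fin n) ℂ} {d : ℕ}
    (hF : F.IsHomogeneous d) {m : Fin n →₀ ℕ} (hm : m.degree = d) (c : ℂ) :
    contract (monomial m c) F = C (((∏ i, (m i).factorial : ℕ) : ℂ) * c * coeff m F) := by
  conv_lhs => rw [F.as_sum, contract_sum_right]
  refine (Finset.sum_eq_single m (fun m' hm' hne => ?_) fun hm => ?_).trans
    (contract_monomial_self m c _)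
  · refine contract_monomial_eq_zero_of_degree_eq ?_ hne.symm c _
    rw [hm, Finsupp.degree_eq_weight_one]
    exact (hF (mem_support_iff.mp hm')).symm
  · rw [notMem_support_iff.mp hm, monomial_zero]
    exact map_zero _

theorem exists_isHomogeneous_contract_eq_C (d : ℕ) (μ : Module.Dual ℂ (MvPolynomial (Fin n) ℂ)) :
    ∃ Φ : MvPolynomial (Fin n) ℂ, Φ.IsHomogeneous d ∧
      ∀ F : MvPolynomial (Fin n) ℂ, F.IsHomogeneous d → contract Φ F = C (μ F) := by
  set A := (Finsupp.finite_of_degree_eq (σ := Fin n) d).toFinset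
  have hA : ∀ m, m ∈ A ↔ m.degree = d := fun m => Set.Finite.mem_toFinset _
  refine ⟨∑ m ∈ A, monomial m (((∏ i, (m i).factorial : ℕ) : ℂ)⁻¹ * μ (monomial m 1)),
    ?_, fun F hF => ?_⟩
  · rw [← mem_homogeneousSubmodule]
    exact Submodule.sum_mem _ fun m hm => isHomogeneous_monomial _ ((hA m).mp hm)
  · conv_rhs => rw [hF.eq_sum_monomial fun m => (hA m).mpr]
    rw [contract_sum_left, map_sum, map_sum]
    refine Finset.sum_congr rfl fun m hm => ?_
    have hsmul : monomial m (coeff m F) = coeff m F • monomial m (1 : ℂ) := by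
      rw [smul_monomial, smul_eq_mul, mul_one]
    rw [contract_monomial_of_isHomogeneous hF ((hA m).mp hm), hsmul, map_smul, smul_eq_mul]
    have : ((∏ i, (m i).factorial : ℕ) : ℂ) ≠ 0 :=
      Nat.cast_ne_zero.mpr (Finset.prod_ne_zero_iff.mpr fun i _ => Nat.factorial_ne_zero _)
    field_simp

theorem exists_isHomogeneous_contract_eq_ite {ι : Type*} [DecidableEq ι] {d : ℕ}
    {v : ι → MvPolynomial (Fin n) ℂ} (hv : LinearIndependent ℂ v)
    (hvd : ∀ j, (v j).IsHomogeneous d) :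
    ∃ Θ : ι → MvPolynomial (Fin n) ℂ, (∀ k, (Θ k).IsHomogeneous d) ∧
      ∀ k j, contract (Θ k) (v j) = if j = k then 1 else 0 := by
  obtain ⟨f, hf⟩ := hv.exists_linearMap_apply_eq_single
  choose Θ hΘd hΘ using fun k => exists_isHomogeneous_contract_eq_C d (Finsupp.lapply k ∘ₗ f)
  refine ⟨Θ, hΘd, fun k j => ?_⟩
  rw [hΘ k _ (hvd j)]
  simp [hf, Finsupp.single_apply]

theorem contract_mem_adjoin {V : Submodule ℂ (MvPolynomial (Fin n) ℂ)}
    (hV : V ≤ homogeneousSubmodule (Fin n) ℂ 1) (Θ : MvPolynomial (Fin n) ℂ)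
    {F : MvPolynomial (Fin n) ℂ} (hF : F ∈ Algebra.adjoin ℂ (V : Set (MvPolynomial (Fin n) ℂ))) :
    contract Θ F ∈ Algebra.adjoin ℂ (V : Set (MvPolynomial (Fin n) ℂ)) := by
  induction Θ using MvPolynomial.induction_on generalizing F with
  | C a => rw [contract_C]; exact Subalgebra.smul_mem _ hF a
  | add p q hp hq => rw [contract_add_left]; exact Subalgebra.add_mem _ (hp hF) (hq hF)
  | mul_X p i hp => rw [contract_mul, contract_X]; exact hp (pderiv_mem_adjoin hV i hF)

theorem contract_eq_zero_of_mem_irrIdeal {Θ F : MvPolynomial (Fin n) ℂ} (hΘ : Θ ∈ irrIdeal n)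
    (hF : F ∈ (⊥ : Subalgebra ℂ (MvPolynomial (Fin n) ℂ))) : contract Θ F = 0 := by
  obtain ⟨a, rfl⟩ := Ideal.mem_span_range_iff_exists_fun.mp hΘ
  obtain ⟨c, rfl⟩ := Algebra.mem_bot.mp hF
  simp [contract_sum_left, contract_mul, contract_X, contract_zero_right, algebraMap_eq]

theorem contract_eq_zero_of_mem_irrIdeal_mul {I : Ideal (MvPolynomial (Fin n) ℂ)}
    {F : MvPolynomial (Fin n) ℂ} (hI : ∀ Ξ ∈ I, contract Ξ F ∈ (⊥ : Subalgebra ℂ _))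
    {Θ : MvPolynomial (Fin n) ℂ} (hΘ : Θ ∈ irrIdeal n * I) : contract Θ F = 0 := by
  refine Submodule.mul_induction_on hΘ (fun a ha Ξ hΞ => ?_) fun x y hx hy => ?_
  · rw [contract_mul]
    exact contract_eq_zero_of_mem_irrIdeal ha (hI Ξ hΞ)
  · rw [contract_add_left, hx, hy, add_zero]

theorem mem_seriesApolarIdeal {W : Submodule ℂ (MvPolynomial (Fin n) ℂ)}
    {Θ : MvPolynomial (Fin n) ℂ} : Θ ∈ seriesApolarIdeal W ↔ ∀ F ∈ W, contract Θ F = 0 := by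
  simp only [seriesApolarIdeal, Ideal.mem_iInf, mem_apolarIdeal]

theorem mem_seriesApolarIdeal_of_basis {W : Submodule ℂ (MvPolynomial (Fin n) ℂ)} {ι : Type*}
    (b : Module.Basis ι ℂ W) {Θ : MvPolynomial (Fin n) ℂ} (h : ∀ j, contract Θ (b j) = 0) :
    Θ ∈ seriesApolarIdeal W := by
  have hker : apolarAlgHom n Θ ∘ₗ W.subtype = 0 := b.ext h
  exact mem_seriesApolarIdeal.mpr fun F hF => LinearMap.congr_fun hker ⟨F, hF⟩

theorem contract_mem_bot_of_contract_add_eq_zero {V₁ V₂ : Submodule ℂ (MvPolynomial (Fin n) ℂ)}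
    (hV₁ : V₁ ≤ homogeneousSubmodule (Fin n) ℂ 1) (hV₂ : V₂ ≤ homogeneousSubmodule (Fin n) ℂ 1)
    (hV : Disjoint V₁ V₂) {G H : MvPolynomial (Fin n) ℂ}
    (hG : G ∈ Algebra.adjoin ℂ (V₁ : Set (MvPolynomial (Fin n) ℂ)))
    (hH : H ∈ Algebra.adjoin ℂ (V₂ : Set (MvPolynomial (Fin n) ℂ)))
    {Ξ : MvPolynomial (Fin n) ℂ} (hΞ : contract Ξ (G + H) = 0) :
    contract Ξ G ∈ (⊥ : Subalgebra ℂ (MvPolynomial (Fin n) ℂ)) := by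
  refine adjoin_inf_adjoin_le_bot hV₁ hV₂ hV ⟨contract_mem_adjoin hV₁ Ξ hG, ?_⟩
  rw [eq_neg_of_add_eq_zero_left ((contract_add_right Ξ G H).symm.trans hΞ)]
  exact neg_mem (contract_mem_adjoin hV₂ Ξ hH)

end Contraction

theorem linear_series_direct_sum_generators_general
    (n d : ℕ) (W W₁ W₂ V₁ V₂ : Submodule ℂ (MvPolynomial (Fin n) ℂ))
    (hW : W ≤ homogeneousSubmodule (Fin n) ℂ d)
    (hV₁ : V₁ ≤ homogeneousSubmodule (Fin n) ℂ 1)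
    (hV₂ : V₂ ≤ homogeneousSubmodule (Fin n) ℂ 1)
    (hVdisj : V₁ ⊓ V₂ = ⊥)
    (hW₁ : ∀ w ∈ W₁, MvPolynomial.IsHomogeneous w d ∧
      w ∈ Algebra.adjoin ℂ (V₁ : Set (MvPolynomial (Fin n) ℂ)))
    (hW₂ : ∀ w ∈ W₂, MvPolynomial.IsHomogeneous w d ∧
      w ∈ Algebra.adjoin ℂ (V₂ : Set (MvPolynomial (Fin n) ℂ)))
    (hWle : W ≤ W₁ ⊔ W₂)
    (hker₁ : W ⊓ W₂ = ⊥)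
    (hker₂ : W ⊓ W₁ = ⊥) :
    MinGensAtLeast (seriesApolarIdeal W) d (Module.finrank ℂ W) := by
  have : Module.Finite ℂ (homogeneousSubmodule (Fin n) ℂ d) :=
    Module.Finite.iff_fg.mpr (homogeneousSubmodule_fg (Fin n) ℂ d)
  have : FiniteDimensional ℂ W := Submodule.finiteDimensional_of_le hW
  let b := Module.finBasis ℂ W
  choose G hG H hH hGH using fun j => Submodule.mem_sup.mp (hWle (b j).2)
  have hindep : LinearIndependent ℂ (Sum.elim G (W.subtype ∘ b)) :=
    (b.linearIndependent.map' W.subtype W.ker_subtype).sum_elim_of_sub_mem (fun j => (b j).2)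
      hG (fun j => by simpa [← hGH j] using hH j) (disjoint_iff.mpr hker₂)
      (disjoint_iff.mpr hker₁)
  obtain ⟨Θ, hΘd, hΘ⟩ := exists_isHomogeneous_contract_eq_ite hindep
    (Sum.forall.mpr ⟨fun j => (hW₁ _ (hG j)).1, fun j => hW (b j).2⟩)
  refine ⟨Θ ∘ Sum.inl, fun i => ⟨mem_seriesApolarIdeal_of_basis b fun j => ?_, hΘd _⟩,
    fun c hc j => ?_⟩
  · simpa using hΘ (Sum.inl i) (Sum.inr j)
  · have hG_const : ∀ Ξ ∈ seriesApolarIdeal W, contract Ξ (G j) ∈ (⊥ : Subalgebra ℂ _) :=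
      fun Ξ hΞ => contract_mem_bot_of_contract_add_eq_zero hV₁ hV₂ (disjoint_iff.mpr hVdisj)
        (hW₁ _ (hG j)).2 (hW₂ _ (hH j)).2 (hGH j ▸ mem_seriesApolarIdeal.mp hΞ _ (b j).2)
    have hΘG : ∀ i, contract (Θ (Sum.inl i)) (G j) = if Sum.inl j = Sum.inl i then 1 else 0 :=
      fun i => hΘ (Sum.inl i) (Sum.inl j)
    simpa [contract_sum_left, contract_smul_left, hΘG] using
      contract_eq_zero_of_mem_irrIdeal_mul hG_const hc

/-- If a linear series `W ⊆ S^d V` admits a direct sum decomposition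
(`V = V₁ ⊕ V₂`, `W ⊆ W₁ ⊕ W₂` with `W_i ⊆ S^d V_i` and both projections `W → W_i`
isomorphisms), then `W^⊥` has at least `dim_ℂ W` minimal generators of degree `d`. -/
theorem linear_series_direct_sum_generators
    (n d : ℕ) (W W₁ W₂ V₁ V₂ : Submodule ℂ (MvPolynomial (Fin n) ℂ))
    (hW : W ≤ homogeneousSubmodule (Fin n) ℂ d)
    (hV₁ : V₁ ≤ homogeneousSubmodule (Fin n) ℂ 1)
    (hV₂ : V₂ ≤ homogeneousSubmodule (Fin n) ℂ 1)
    (hVdisj : V₁ ⊓ V₂ = ⊥)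
    (hVsup : V₁ ⊔ V₂ = homogeneousSubmodule (Fin n) ℂ 1)
    (hW₁ : ∀ w ∈ W₁, MvPolynomial.IsHomogeneous w d ∧
      w ∈ Algebra.adjoin ℂ (V₁ : Set (MvPolynomial (Fin n) ℂ)))
    (hW₂ : ∀ w ∈ W₂, MvPolynomial.IsHomogeneous w d ∧
      w ∈ Algebra.adjoin ℂ (V₂ : Set (MvPolynomial (Fin n) ℂ)))
    (hWdisj : W₁ ⊓ W₂ = ⊥)
    (hWle : W ≤ W₁ ⊔ W₂)
    (hker₁ : W ⊓ W₂ = ⊥)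
    (hker₂ : W ⊓ W₁ = ⊥)
    (hsurj₁ : ∀ w₁ ∈ W₁, ∃ w₂ ∈ W₂, w₁ + w₂ ∈ W)
    (hsurj₂ : ∀ w₂ ∈ W₂, ∃ w₁ ∈ W₁, w₁ + w₂ ∈ W) :
    MinGensAtLeast (seriesApolarIdeal W) d (Module.finrank ℂ W) :=
  linear_series_direct_sum_generators_general n d W W₁ W₂ V₁ V₂ hW hV₁ hV₂ hVdisj hW₁ hW₂ hWle hker₁
    hker₂
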